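/- Let α ∈ ℝⁿ with no coordinate in πℤ. For any Schwartz function f and x ∈ ℝⁿ, F_α(-e_{-α} Δ[e_α f])(x) = 4π² |x̃|² F_α(f)(x), where Δ is the Laplacian and x̃ = (x₁ csc α₁,...,xₙ csc αₙ). -/

import Mathlib

open MeasureTheory Real SchwartzMap Filter
open scoped FourierTransform

noncomputable section

abbrev Rn (n : ℕ) := EuclideanSpace ℝ (Fin n)

/-- The chirp function `e_α(x) = exp(2πi Σₖ (cot αₖ / 2) xₖ²)`. -/
def chirp {n : ℕ} (α : Rn n) (x : Rn n) : ℂ :=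
  Complex.exp (2 * (π : ℂ) * Complex.I *
    ((∑ k, Real.cot (α k) / 2 * (x k) ^ 2 : ℝ) : ℂ))

/-- The constant `c(α) = ∏ₖ √(1 - i cot αₖ)`. -/
def cConst {n : ℕ} (α : Rn n) : ℂ :=
  ∏ k, (1 - Complex.I * (Real.cot (α k) : ℂ)) ^ ((1 : ℂ) / 2)

/-- The FRFT kernel `K_α(x,u)`. -/
def frftKernel {n : ℕ} (α : Rn n) (x u : Rn n) : ℂ :=
  ∏ k, (1 - Complex.I * (Real.cot (α k) : ℂ)) ^ ((1 : ℂ) / 2) *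
    Complex.exp (2 * (π : ℂ) * Complex.I *
      ((Real.cot (α k) / 2 * ((x k) ^ 2 + (u k) ^ 2)
        - x k * u k / Real.sin (α k) : ℝ) : ℂ))

/-- The multidimensional fractional Fourier transform. -/
def frft {n : ℕ} (α : Rn n) (f : Rn n → ℂ) (u : Rn n) : ℂ :=
  ∫ x, f x * frftKernel α x u

/-- `ũ = (u₁ csc α₁, ..., uₙ csc αₙ)`. -/
def tilde {n : ℕ} (α u : Rn n) : Rn n :=
  (EuclideanSpace.equiv (Fin n) ℝ).symm fun k => u k / Real.sin (α k)

/-- `γ(β) = π^{n/2} 2^β Γ(β/2) / Γ((n-β)/2)`. -/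
def gammaC (n : ℕ) (β : ℝ) : ℝ :=
  π ^ ((n : ℝ) / 2) * 2 ^ β * Real.Gamma (β / 2) / Real.Gamma (((n : ℝ) - β) / 2)

/-- The classical Riesz potential `I_β`. -/
def rieszPot (n : ℕ) (β : ℝ) (f : Rn n → ℂ) (x : Rn n) : ℂ :=
  ((1 / gammaC n β : ℝ) : ℂ) * ∫ y, f y / ((‖x - y‖ ^ ((n : ℝ) - β) : ℝ) : ℂ)

/-- The fractional Riesz potential related to chirp functions `I_β^α`. -/
def rieszPotChirp {n : ℕ} (α : Rn n) (β : ℝ) (f : Rn n → ℂ) (x : Rn n) : ℂ :=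
  ((1 / gammaC n β : ℝ) : ℂ) * chirp (-α) x *
    ∫ y, f y * chirp α y / ((‖x - y‖ ^ ((n : ℝ) - β) : ℝ) : ℂ)

/-- `c_n = Γ((n+1)/2)/π^{(n+1)/2}`. -/
def nConst (n : ℕ) : ℝ := Real.Gamma (((n : ℝ) + 1) / 2) / π ^ (((n : ℝ) + 1) / 2)

/-- The j-th fractional Riesz transform related to chirp functions (principal value). -/
def rieszTransChirp {n : ℕ} (α : Rn n) (j : Fin n) (f : Rn n → ℂ) (x : Rn n) : ℂ :=
  ((nConst n : ℝ) : ℂ) * chirp (-α) x *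
    limUnder (nhdsWithin (0 : ℝ) (Set.Ioi 0)) fun ε =>
      ∫ y in {y : Rn n | ε < dist x y},
        (((x j - y j) / ‖x - y‖ ^ ((n : ℝ) + 1) : ℝ) : ℂ) * f y * chirp α y

/-- Partial derivative in the k-th coordinate direction. -/
def partialD {n : ℕ} (k : Fin n) (g : Rn n → ℂ) (y : Rn n) : ℂ :=
  fderiv ℝ g y (EuclideanSpace.single k 1)

/-- `α` has no coordinate in `πℤ`. -/
def notPiZ {n : ℕ} (α : Rn n) : Prop := ∀ k, ∀ m : ℤ, α k ≠ m * π

/-! The kernel factors as `K_α(y, x) = c(α) e_α(x) e_α(y) e^{-2πi⟨y, x̃⟩}`, so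
`F_α g (x) = c(α) e_α(x) 𝓕(e_α g)(x̃)`. Since `e_α e_{-α} = 1`, the left-hand side is therefore
`c(α) e_α(x) 𝓕(-Δ h)(x̃)` with `h = e_α f`, which is a Schwartz function because the chirp has
temperate growth, and `𝓕(-Δ h)(ξ) = 4π²|ξ|² 𝓕 h(ξ)`. -/

open LineDeriv Laplacian FourierTransform
open scoped RealInnerProductSpace

theorem iteratedDeriv_cexp_const_mul_ofReal (n : ℕ) (c : ℂ) :
    iteratedDeriv n (fun t : ℝ => Complex.exp (c * t)) =
      fun t : ℝ => c ^ n * Complex.exp (c * t) := by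
  induction n with
  | zero => simp
  | succ n ih =>
    ext t
    have h := (((hasDerivAt_id (t : ℂ)).const_mul c).cexp.const_mul (c ^ n)).comp_ofReal
    rw [iteratedDeriv_succ, ih]
    exact h.deriv.trans (by simp only [id, mul_one]; ring)

theorem hasTemperateGrowth_cexp_const_mul_ofReal {c : ℂ} (hc : c.re = 0) :
    (fun t : ℝ => Complex.exp (c * t)).HasTemperateGrowth := by
  refine ⟨(contDiff_const.mul Complex.ofRealCLM.contDiff).cexp, fun N => ⟨0, ‖c‖ ^ N, fun t => ?_⟩⟩
  rw [norm_iteratedFDeriv_eq_norm_iteratedDeriv, iteratedDeriv_cexp_const_mul_ofReal]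
  simp [Complex.norm_exp, hc]

theorem chirp_hasTemperateGrowth {n : ℕ} (α : Rn n) : (chirp α).HasTemperateGrowth := by
  have hq : (fun y : Rn n => ∑ k, Real.cot (α k) / 2 * y k ^ 2).HasTemperateGrowth :=
    .sum fun k _ => (Function.HasTemperateGrowth.const _).mul
      ((EuclideanSpace.proj k).hasTemperateGrowth.pow 2)
  exact (hasTemperateGrowth_cexp_const_mul_ofReal (by simp)).comp hq

namespace SchwartzMap

variable {E F : Type*} [NormedAddCommGroup E] [InnerProductSpace ℝ E] [FiniteDimensional ℝ E]
  [MeasurableSpace E] [BorelSpace E] [NormedAddCommGroup F] [NormedSpace ℂ F] [CompleteSpace F]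

theorem fourier_laplacian_apply (f : 𝓢(E, F)) (ξ : E) :
    𝓕 (Δ f) ξ = (-(2 * π) ^ 2 * ‖ξ‖ ^ 2) • 𝓕 f ξ := by
  have h : (fun ξ : E => ‖ξ‖ ^ 2).HasTemperateGrowth := by fun_prop
  rw [laplacian_eq_fourierMultiplierCLM, fourierMultiplierCLM_apply, fourier_smul,
    fourier_fourierInv_eq, smul_apply, smulLeftCLM_apply_apply h, mul_smul]

end SchwartzMap

theorem partialD_eq_lineDerivOp {n : ℕ} (k : Fin n) (g : 𝓢(Rn n, ℂ)) :
    partialD k g = ⇑(∂_{EuclideanSpace.single k (1 : ℝ)} g : 𝓢(Rn n, ℂ)) := by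
  ext y
  rw [partialD, SchwartzMap.lineDerivOp_apply_eq_fderiv]

theorem sum_partialD_partialD_eq_laplacian {n : ℕ} (g : 𝓢(Rn n, ℂ)) (y : Rn n) :
    ∑ j, partialD j (partialD j g) y = Δ g y := by
  simp [SchwartzMap.laplacian_eq_sum (EuclideanSpace.basisFun (Fin n) ℝ), partialD_eq_lineDerivOp]

theorem chirp_mul_chirp_neg {n : ℕ} (α y : Rn n) : chirp α y * chirp (-α) y = 1 := by
  have hcot : ∀ k, Real.cot ((-α) k) = -Real.cot (α k) := fun k => by
    simp [Real.cot_eq_cos_div_sin, div_neg]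
  rw [chirp, chirp, ← Complex.exp_add, ← mul_add, ← Complex.ofReal_add, ← Finset.sum_add_distrib]
  simp only [hcot, neg_div, neg_mul, add_neg_cancel, Finset.sum_const_zero, Complex.ofReal_zero,
    mul_zero, Complex.exp_zero]

theorem inner_tilde {n : ℕ} (α x y : Rn n) :
    ⟪y, tilde α x⟫ = ∑ k, y k * (x k / Real.sin (α k)) := by
  simp [PiLp.inner_apply, tilde, mul_comm]

theorem frftKernel_eq {n : ℕ} (α y x : Rn n) :
    frftKernel α y x = cConst α * chirp α x *
      (𝐞 (-⟪y, tilde α x⟫) • chirp α y) := by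
  rw [frftKernel, cConst, chirp, chirp, Finset.prod_mul_distrib, ← Complex.exp_sum,
    Circle.smul_def, Real.fourierChar_apply, smul_eq_mul, inner_tilde]
  simp only [mul_assoc, ← Complex.exp_add]
  congr 2
  push_cast
  simp only [Finset.mul_sum, Finset.sum_mul, ← Finset.sum_neg_distrib, ← Finset.sum_add_distrib]
  exact Finset.sum_congr rfl fun k _ => by ring

theorem frft_eq_fourier {n : ℕ} (α : Rn n) (g : Rn n → ℂ) (x : Rn n) :
    frft α g x = cConst α * chirp α x * 𝓕 (fun y => chirp α y * g y) (tilde α x) := by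
  simp_rw [frft, Real.fourier_eq, frftKernel_eq, Circle.smul_def, smul_eq_mul,
    ← integral_const_mul]
  congr 1 with y
  ring

theorem frft_laplacian_general {n : ℕ} (α : Rn n) (f : 𝓢(Rn n, ℂ)) (x : Rn n) :
    frft α (fun y => -(chirp (-α) y *
        ∑ j, partialD j (partialD j (fun z => chirp α z * f z)) y)) x
      = 4 * (π : ℂ) ^ 2 * ((‖tilde α x‖ ^ 2 : ℝ) : ℂ) * frft α (⇑f) x := by
  set h : 𝓢(Rn n, ℂ) := SchwartzMap.smulLeftCLM ℂ (chirp α) f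
  have hh : (fun z => chirp α z * f z) = ⇑h :=
    funext fun z => (SchwartzMap.smulLeftCLM_apply_apply (chirp_hasTemperateGrowth α) f z).symm
  have hΔ : (fun y => chirp α y * -(chirp (-α) y * ∑ j, partialD j (partialD j ⇑h) y))
      = ⇑(-Δ h) := by
    ext y
    rw [sum_partialD_partialD_eq_laplacian, ← neg_mul_eq_mul_neg, ← mul_assoc,
      chirp_mul_chirp_neg, one_mul, neg_apply]
  rw [frft_eq_fourier, frft_eq_fourier, hh, hΔ, ← SchwartzMap.fourier_coe,
    ← SchwartzMap.fourier_coe, FourierTransform.fourier_neg, neg_apply,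
    SchwartzMap.fourier_laplacian_apply, Complex.real_smul]
  push_cast
  ring

/-- FRFT and the Laplacian related to chirp functions. -/
theorem frft_laplacian {n : ℕ} (α : Rn n) (hα : notPiZ α) (f : 𝓢(Rn n, ℂ)) (x : Rn n) :
    frft α (fun y => -(chirp (-α) y *
        ∑ j, partialD j (partialD j (fun z => chirp α z * f z)) y)) x
      = 4 * (π : ℂ) ^ 2 * ((‖tilde α x‖ ^ 2 : ℝ) : ℂ) * frft α (⇑f) x :=
  frft_laplacian_general α f x
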